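/- For n ≥ 6, let CC(n) be the probability distribution on simple graphs with vertex set {1,...,n} defined as follows: with probability 1/2 sample an Erdős–Rényi graph G(n, 1/2) (each edge present independently with probability 1/2); otherwise assign each vertex independently and uniformly to one of two sets A, B and output the graph that is the disjoint union of a clique on A and a clique on B. Then CC(n) is edge-subgraph independent but not subgraph independent. -/

import Mathlib

open scoped Classical

noncomputable def pr {n : ℕ} (μ : SimpleGraph (Fin n) → ℝ) (P : SimpleGraph (Fin n) → Prop) : ℝ :=
  ∑ G : SimpleGraph (Fin n), if P G then μ G else 0

def IsDist {n : ℕ} (μ : SimpleGraph (Fin n) → ℝ) : Prop :=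
  (∀ G, 0 ≤ μ G) ∧ ∑ G : SimpleGraph (Fin n), μ G = 1

def EdgeSubgraphIndep {n : ℕ} (μ : SimpleGraph (Fin n) → ℝ) : Prop :=
  ∀ u v : Fin n, u ≠ v → ∀ W : Set (Fin n), u ∉ W → v ∉ W →
    ∀ H : SimpleGraph W,
      pr μ (fun G => G.induce W = H ∧ G.Adj u v)
        = pr μ (fun G => G.induce W = H) * pr μ (fun G => G.Adj u v)

def SubgraphIndep {n : ℕ} (μ : SimpleGraph (Fin n) → ℝ) : Prop :=
  ∀ V W : Set (Fin n), Disjoint V W →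
    ∀ (HV : SimpleGraph V) (HW : SimpleGraph W),
      pr μ (fun G => G.induce V = HV ∧ G.induce W = HW)
        = pr μ (fun G => G.induce V = HV) * pr μ (fun G => G.induce W = HW)

def cliqueGraph {n : ℕ} (c : Fin n → Bool) : SimpleGraph (Fin n) where
  Adj u v := u ≠ v ∧ c u = c v
  symm := ⟨fun u v h => ⟨h.1.symm, h.2.symm⟩⟩
  loopless := ⟨fun u h => h.1 rfl⟩

noncomputable def CC (n : ℕ) : SimpleGraph (Fin n) → ℝ := fun G =>
  (1 / 2) * (1 / 2 : ℝ) ^ (n.choose 2)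
    + (1 / 2) *
      (((Finset.univ.filter (fun c : Fin n → Bool => cliqueGraph c = G)).card : ℝ) / 2 ^ n)

/-!
`pr (CC n)` is the average of the uniform measure on graphs and the law of `cliqueGraph c` for a
uniform colouring `c`. If `u, v ∉ W`, toggling the edge `uv` of a graph, resp. recolouring `u`,
is an involution that fixes `G[W]` and flips whether `uv` is an edge; so in both halves the
event `G[W] = H` is split evenly by `uv`, which is edge-subgraph independence.

A union of two cliques has no independent set of size three, so for disjoint triples `V`, `W`
only the Erdős–Rényi half sees `G[V] = ⊥` or `G[W] = ⊥`. Hence each has probability `1/16`,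
while both together have probability `1/2 · 1/64 = 1/128 ≠ 1/256`.
-/

open Finset
open scoped symmDiff

namespace SimpleGraph

variable {V : Type*}

lemma symmDiff_edge_adj_self {u v : V} (huv : u ≠ v) (G : SimpleGraph V) :
    (G ∆ edge u v).Adj u v ↔ ¬ G.Adj u v := by
  simp [symmDiff_def, edge_adj, huv]

lemma symmDiff_edge_adj_of_left {u v x : V} (hxu : x ≠ u) (hxv : x ≠ v) (G : SimpleGraph V)
    (y : V) : (G ∆ edge u v).Adj x y ↔ G.Adj x y := by
  simp [symmDiff_def, edge_adj, hxu, hxv]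

lemma symmDiff_edge_adj_of_right {u v y : V} (hyu : y ≠ u) (hyv : y ≠ v) (G : SimpleGraph V)
    (x : V) : (G ∆ edge u v).Adj x y ↔ G.Adj x y := by
  rw [adj_comm, symmDiff_edge_adj_of_left hyu hyv, adj_comm]

lemma induce_symmDiff_edge {u v : V} {W : Set V} (hu : u ∉ W) (hv : v ∉ W) (G : SimpleGraph V) :
    (G ∆ edge u v).induce W = G.induce W := by
  ext ⟨x, hx⟩ ⟨y, hy⟩
  exact symmDiff_edge_adj_of_left (ne_of_mem_of_not_mem hx hu) (ne_of_mem_of_not_mem hx hv) G y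

lemma induce_eq_bot_iff {G : SimpleGraph V} {s : Set V} : G.induce s = ⊥ ↔ G.IsIndepSet s := by
  rw [isIndepSet_iff]
  refine ⟨fun h u hu v hv _ ↦ ?_, fun h ↦ ?_⟩
  · simp [← induce_adj (u := ⟨u, hu⟩) (v := ⟨v, hv⟩), h]
  · ext ⟨v, hv⟩ ⟨w, hw⟩
    simpa using fun hvw => h hv hw hvw.ne hvw

lemma induce_triple_eq_bot_iff {G : SimpleGraph V} {a b c : V} :
    G.induce {a, b, c} = ⊥ ↔ (¬ G.Adj a b ∧ ¬ G.Adj a c) ∧ ¬ G.Adj b c := by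
  rw [induce_eq_bot_iff, isIndepSet_iff]
  have h (x y : V) : (x ≠ y → ¬ G.Adj x y ∧ ¬ G.Adj y x) ↔ ¬ G.Adj x y := by
    rw [G.adj_comm y x, and_self]
    exact ⟨fun h hxy => h hxy.ne hxy, fun h _ => h⟩
  simp only [Set.pairwise_insert, Set.pairwise_singleton, Set.mem_insert_iff,
    Set.mem_singleton_iff, forall_eq_or_imp, forall_eq, h]
  tauto

def equivSetNonDiag : SimpleGraph V ≃ Set {e : Sym2 V // ¬ e.IsDiag} where
  toFun G := {e | e.1 ∈ G.edgeSet}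
  invFun s := fromEdgeSet (Subtype.val '' s)
  left_inv G := by
    ext x y
    simpa using fun h : G.Adj x y => h.ne
  right_inv s := by
    ext ⟨e, he⟩
    simp [he]

lemma card_simpleGraph [Fintype V] [DecidableEq V] :
    Fintype.card (SimpleGraph V) = 2 ^ (Fintype.card V).choose 2 := by
  rw [Fintype.card_congr equivSetNonDiag, Fintype.card_set, Sym2.card_subtype_not_diag]

end SimpleGraph

section UniformProb

variable {α : Type*} [Fintype α]

noncomputable def uniformProb (P : α → Prop) : ℝ := #{a | P a} / Fintype.card α

lemma uniformProb_true [Nonempty α] : uniformProb (fun _ : α => True) = 1 := by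
  simp [uniformProb]

lemma uniformProb_and_eq_half {P B : α → Prop} (τ : α → α) (hτ : Function.Involutive τ)
    (hP : ∀ a, P (τ a) ↔ P a) (hB : ∀ a, B (τ a) ↔ ¬ B a) :
    uniformProb (fun a => P a ∧ B a) = uniformProb P / 2 := by
  have hswap : #{a | P a ∧ B a} = #{a | P a ∧ ¬ B a} :=
    Finset.card_equiv (hτ.toPerm τ) (by simp [hP, hB])
  have hsplit : #{a | P a ∧ B a} + #{a | P a ∧ ¬ B a} = #{a | P a} := by
    rw [← Finset.filter_filter, ← Finset.filter_filter]
    exact Finset.card_filter_add_card_filter_not _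
  simp only [uniformProb]
  rw [← hsplit, ← hswap]
  push_cast
  ring

lemma uniformProb_eq_zero {P : α → Prop} (h : ∀ a, ¬ P a) :
    uniformProb P = 0 := by
  simp [uniformProb, h]

end UniformProb

lemma Function.involutive_update_not {α : Type*} [DecidableEq α] (a : α) :
    Function.Involutive fun c : α → Bool => Function.update c a (!c a) := by
  intro c
  simp

section CliqueGraph

variable {n : ℕ}

lemma cliqueGraph_adj {c : Fin n → Bool} {u v : Fin n} :
    (cliqueGraph c).Adj u v ↔ u ≠ v ∧ c u = c v := Iff.rfl

lemma cliqueGraph_update_not_adj {u v : Fin n} (huv : u ≠ v) (c : Fin n → Bool) :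
    (cliqueGraph (Function.update c u (!c u))).Adj u v ↔ ¬ (cliqueGraph c).Adj u v := by
  simp [cliqueGraph_adj, huv, Function.update_of_ne huv.symm, Bool.eq_not_iff]

lemma cliqueGraph_induce_update {u : Fin n} {W : Set (Fin n)} (hu : u ∉ W) (c : Fin n → Bool)
    (b : Bool) : (cliqueGraph (Function.update c u b)).induce W = (cliqueGraph c).induce W := by
  ext ⟨x, hx⟩ ⟨y, hy⟩
  simp [cliqueGraph_adj, Function.update_of_ne (ne_of_mem_of_not_mem hx hu),
    Function.update_of_ne (ne_of_mem_of_not_mem hy hu)]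

lemma cliqueGraph_induce_triple_ne_bot {x y z : Fin n} (hxy : x ≠ y) (hxz : x ≠ z)
    (hyz : y ≠ z) (c : Fin n → Bool) : (cliqueGraph c).induce {x, y, z} ≠ ⊥ := by
  rw [Ne, SimpleGraph.induce_triple_eq_bot_iff]
  simp only [cliqueGraph_adj, ne_eq, hxy, hxz, hyz, not_false_eq_true, true_and]
  cases c x <;> cases c y <;> cases c z <;> simp

end CliqueGraph

lemma pr_CC {n : ℕ} (P : SimpleGraph (Fin n) → Prop) :
    pr (CC n) P = (uniformProb P + uniformProb fun c => P (cliqueGraph c)) / 2 := by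
  have hfib : #{c : Fin n → Bool | P (cliqueGraph c)}
      = ∑ G with P G, #{c : Fin n → Bool | cliqueGraph c = G} := by
    rw [Finset.card_eq_sum_card_fiberwise (t := {G | P G}) (f := cliqueGraph)
      fun c hc => by simpa using hc]
    refine Finset.sum_congr rfl fun G hG => ?_
    congr 1
    ext c
    simp only [Finset.mem_filter, Finset.mem_univ, true_and] at hG ⊢
    exact ⟨fun h => h.2, fun h => ⟨h ▸ hG, h⟩⟩
  rw [pr, ← Finset.sum_filter, uniformProb, uniformProb, hfib, SimpleGraph.card_simpleGraph]
  simp only [CC, one_div, inv_pow, sum_add_distrib, sum_const, nsmul_eq_mul, ← mul_sum,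
    ← sum_div, Fintype.card_fin, Nat.cast_pow, Nat.cast_ofNat, Nat.cast_sum, Fintype.card_pi,
    Fintype.card_bool, prod_const, card_univ]
  ring


section UniformGraph

open SimpleGraph

variable {V : Type*} [Fintype V] [DecidableEq V]

lemma uniformProb_and_adj {u v : V} (huv : u ≠ v) {P : SimpleGraph V → Prop}
    (hP : ∀ G, P (G ∆ edge u v) ↔ P G) :
    uniformProb (fun G => P G ∧ G.Adj u v) = uniformProb P / 2 :=
  uniformProb_and_eq_half _ (symmDiff_left_involutive (edge u v)) hP
    (symmDiff_edge_adj_self huv)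

lemma uniformProb_and_not_adj {u v : V} (huv : u ≠ v) {P : SimpleGraph V → Prop}
    (hP : ∀ G, P (G ∆ edge u v) ↔ P G) :
    uniformProb (fun G => P G ∧ ¬ G.Adj u v) = uniformProb P / 2 :=
  uniformProb_and_eq_half _ (symmDiff_left_involutive (edge u v)) hP
    (fun G => by rw [symmDiff_edge_adj_self huv])

lemma uniformProb_and_induce_triple_eq_bot {x y z : V} (hxy : x ≠ y) (hxz : x ≠ z)
    (hyz : y ≠ z) {P : SimpleGraph V → Prop} (hPxy : ∀ G, P (G ∆ edge x y) ↔ P G)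
    (hPxz : ∀ G, P (G ∆ edge x z) ↔ P G) (hPyz : ∀ G, P (G ∆ edge y z) ↔ P G) :
    uniformProb (fun G => P G ∧ G.induce {x, y, z} = ⊥) = uniformProb P / 8 := by
  simp_rw [induce_triple_eq_bot_iff, ← and_assoc]
  rw [uniformProb_and_not_adj hyz, uniformProb_and_not_adj hxz, uniformProb_and_not_adj hxy hPxy]
  · ring
  · intro G
    rw [hPxz, symmDiff_edge_adj_of_right hxy.symm hyz]
  · intro G
    rw [hPyz, symmDiff_edge_adj_of_left hxy hxz, symmDiff_edge_adj_of_left hxy hxz]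

lemma uniformProb_induce_triple_eq_bot {x y z : V} (hxy : x ≠ y) (hxz : x ≠ z) (hyz : y ≠ z) :
    uniformProb (fun G : SimpleGraph V => G.induce {x, y, z} = ⊥) = 1 / 8 := by
  simpa [uniformProb_true] using
    uniformProb_and_induce_triple_eq_bot hxy hxz hyz (P := fun _ => True)
      (by simp) (by simp) (by simp)

end UniformGraph

lemma uniformProb_cliqueGraph_and_adj {n : ℕ} {u v : Fin n} (huv : u ≠ v)
    {P : SimpleGraph (Fin n) → Prop}
    (hP : ∀ c, P (cliqueGraph (Function.update c u (!c u))) ↔ P (cliqueGraph c)) :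
    uniformProb (fun c => P (cliqueGraph c) ∧ (cliqueGraph c).Adj u v)
      = uniformProb (fun c => P (cliqueGraph c)) / 2 :=
  uniformProb_and_eq_half _ (Function.involutive_update_not u) hP (cliqueGraph_update_not_adj huv)

section CC

open SimpleGraph

variable {n : ℕ}

lemma pr_CC_and_adj {u v : Fin n} (huv : u ≠ v) {P : SimpleGraph (Fin n) → Prop}
    (hP : ∀ G, P (G ∆ edge u v) ↔ P G)
    (hPc : ∀ c, P (cliqueGraph (Function.update c u (!c u))) ↔ P (cliqueGraph c)) :
    pr (CC n) (fun G => P G ∧ G.Adj u v) = pr (CC n) P / 2 := by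
  rw [pr_CC, pr_CC, uniformProb_and_adj huv hP, uniformProb_cliqueGraph_and_adj huv hPc]
  ring

lemma pr_CC_adj {u v : Fin n} (huv : u ≠ v) : pr (CC n) (fun G => G.Adj u v) = 1 / 2 := by
  simpa [pr_CC, uniformProb_true] using pr_CC_and_adj huv (P := fun _ => True) (by simp) (by simp)

theorem edgeSubgraphIndep_CC : EdgeSubgraphIndep (CC n) := by
  intro u v huv W hu hv H
  rw [pr_CC_and_adj huv (fun G => by rw [induce_symmDiff_edge hu hv])
    (fun c => by rw [cliqueGraph_induce_update hu]), pr_CC_adj huv]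
  ring

lemma pr_CC_and_induce_triple_eq_bot {x y z : Fin n} (hxy : x ≠ y) (hxz : x ≠ z) (hyz : y ≠ z)
    {P : SimpleGraph (Fin n) → Prop} (hPxy : ∀ G, P (G ∆ edge x y) ↔ P G)
    (hPxz : ∀ G, P (G ∆ edge x z) ↔ P G) (hPyz : ∀ G, P (G ∆ edge y z) ↔ P G) :
    pr (CC n) (fun G => P G ∧ G.induce {x, y, z} = ⊥) = uniformProb P / 16 := by
  rw [pr_CC, uniformProb_and_induce_triple_eq_bot hxy hxz hyz hPxy hPxz hPyz,
    uniformProb_eq_zero fun c h => cliqueGraph_induce_triple_ne_bot hxy hxz hyz c h.2]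
  ring

lemma pr_CC_induce_triple_eq_bot {x y z : Fin n} (hxy : x ≠ y) (hxz : x ≠ z) (hyz : y ≠ z) :
    pr (CC n) (fun G => G.induce {x, y, z} = ⊥) = 1 / 16 := by
  simpa [uniformProb_true] using
    pr_CC_and_induce_triple_eq_bot hxy hxz hyz (P := fun _ => True) (by simp) (by simp) (by simp)

theorem not_subgraphIndep_CC (hn : 6 ≤ n) : ¬ SubgraphIndep (CC n) := by
  set v : Fin 6 → Fin n := Fin.castLE hn
  have hv : Function.Injective v := Fin.castLE_injective hn
  have hne {i j : Fin 6} (hij : i ≠ j) : v i ≠ v j := hv.ne hij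
  have hW {i j : Fin 6} (hi : 3 ≤ i) (hj : 3 ≤ j) (G : SimpleGraph (Fin n)) :
      (G ∆ edge (v i) (v j)).induce {v 0, v 1, v 2} = G.induce {v 0, v 1, v 2} := by
    refine induce_symmDiff_edge ?_ ?_ G <;> simp [hv.eq_iff] <;> omega
  have hVW : pr (CC n) (fun G => G.induce {v 0, v 1, v 2} = ⊥ ∧ G.induce {v 3, v 4, v 5} = ⊥)
      = 1 / 128 := by
    rw [pr_CC_and_induce_triple_eq_bot (hne (by decide)) (hne (by decide)) (hne (by decide))
      (fun G => by rw [hW (by decide) (by decide)]) (fun G => by rw [hW (by decide) (by decide)])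
      (fun G => by rw [hW (by decide) (by decide)]),
      uniformProb_induce_triple_eq_bot (hne (by decide)) (hne (by decide)) (hne (by decide))]
    norm_num
  intro h
  have := h {v 0, v 1, v 2} {v 3, v 4, v 5} (by simp [hv.eq_iff]) ⊥ ⊥
  rw [hVW, pr_CC_induce_triple_eq_bot (hne (by decide)) (hne (by decide)) (hne (by decide)),
    pr_CC_induce_triple_eq_bot (hne (by decide)) (hne (by decide)) (hne (by decide))] at this
  norm_num at this

end CC

theorem CC_edge_subgraph_not_subgraph (n : ℕ) (hn : 6 ≤ n) :
    EdgeSubgraphIndep (CC n) ∧ ¬ SubgraphIndep (CC n) :=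
  ⟨edgeSubgraphIndep_CC, not_subgraphIndep_CC hn⟩
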